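/- Let A : X ⇒ X and B : X ⇒ X be maximally monotone operators. If there exists C ∈ {A, B} such that dom C = X and C is 3* monotone, then ran(Id − T_{(A,B)}) ≃ ran A + ran B. -/

import Mathlib

open Set Pointwise

/-- Domain of a set-valued operator. -/
def svDom {X : Type*} (A : X → Set X) : Set X := {x | (A x).Nonempty}

/-- Range of a set-valued operator. -/
def svRan {X : Type*} (A : X → Set X) : Set X := ⋃ x, A x

/-- Monotonicity of a set-valued operator. -/
def IsMonotoneOp {X : Type*} [NormedAddCommGroup X] [InnerProductSpace ℝ X]
    (A : X → Set X) : Prop :=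
  ∀ ⦃x u y v : X⦄, u ∈ A x → v ∈ A y → 0 ≤ (inner ℝ (x - y) (u - v) : ℝ)

/-- Maximal monotonicity of a set-valued operator. -/
def IsMaxMonotoneOp {X : Type*} [NormedAddCommGroup X] [InnerProductSpace ℝ X]
    (A : X → Set X) : Prop :=
  IsMonotoneOp A ∧
    ∀ x u : X, (∀ y v : X, v ∈ A y → 0 ≤ (inner ℝ (x - y) (u - v) : ℝ)) → u ∈ A x

/-- `A` is 3* monotone (rectangular): for every `x ∈ dom A` and `v ∈ ran A`, the set
`{⟪x - z, v - w⟫ : (z,w) ∈ gra A}` is bounded below. -/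
def Is3StarMonotoneOp {X : Type*} [NormedAddCommGroup X] [InnerProductSpace ℝ X]
    (A : X → Set X) : Prop :=
  ∀ x ∈ svDom A, ∀ v ∈ svRan A,
    BddBelow {r : ℝ | ∃ z w : X, w ∈ A z ∧ r = (inner ℝ (x - z) (v - w) : ℝ)}

/-- Two sets are nearly equal if they have the same closure and the same relative
(intrinsic) interior. -/
def NearEq {X : Type*} [NormedAddCommGroup X] [NormedSpace ℝ X] (C D : Set X) : Prop :=
  closure C = closure D ∧ intrinsicInterior ℝ C = intrinsicInterior ℝ D

/-- `J` is the resolvent of `A`: the single-valued, everywhere-defined map with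
`x - J x ∈ A (J x)` for all `x`. -/
def IsResolventOf {X : Type*} [NormedAddCommGroup X] (J : X → X) (A : X → Set X) : Prop :=
  ∀ x : X, x - J x ∈ A (J x)

/-- The Douglas–Rachford operator `T = Id - J_A + J_B ∘ (2 J_A - Id)` built from
the resolvents `J_A` and `J_B`. -/
noncomputable def drT {X : Type*} [NormedAddCommGroup X] [NormedSpace ℝ X]
    (JA JB : X → X) : X → X :=
  fun x => x - JA x + JB ((2 : ℝ) • JA x - x)

/-!
Write `F = Id - T_{(A,B)}`. With `p = J_A x` and `q = J_B (2p - x)` one has `F x = a + b` where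
`a = x - p ∈ A p` and `b = 2p - x - q ∈ B q`; hence `ran F ⊆ ran A + ran B`, and monotonicity of
`A` and `B` makes `F` firmly nonexpansive. Conversely, given `w = a' + b'`, solve the regularized
equation `ε x + F x = w`. Monotonicity of one operator and 3* monotonicity of the other (at the
point that full domain makes available) bound `ε ‖x‖²` independently of `ε`, so `F x = w - ε x → w`
and `ran A + ran B ⊆ cl (ran F)`.

The range of a firmly nonexpansive map on a finite-dimensional space is nearly convex: for `u` in
the relative interior of its convex hull, the solutions of `ε x + F x = u` either stay bounded
along a subsequence, and a limit point solves `F x = u`, or they blow up, and their limiting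
direction would separate `u` from `ran F`. A set `R ⊆ S ⊆ cl R` whose convex hull has relative
interior inside `R` is nearly equal to `S`.
-/

open scoped RealInnerProductSpace
open Filter Topology

section IntrinsicInterior

variable {X : Type*} [NormedAddCommGroup X] [NormedSpace ℝ X] {s t : Set X} {x : X}

theorem mem_intrinsicInterior_iff_ball :
    x ∈ intrinsicInterior ℝ s ↔
      x ∈ s ∧ ∃ ρ > 0, Metric.ball x ρ ∩ (affineSpan ℝ s : Set X) ⊆ s := by
  rw [mem_intrinsicInterior]
  constructor
  · rintro ⟨y, hy, rfl⟩
    obtain ⟨ρ, hρ, hball⟩ := Metric.mem_nhds_iff.mp (mem_interior_iff_mem_nhds.mp hy)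
    refine ⟨interior_subset (s := Subtype.val ⁻¹' s) hy, ρ, hρ, fun v ⟨hvx, hv⟩ => ?_⟩
    exact hball (show (⟨v, hv⟩ : affineSpan ℝ s) ∈ Metric.ball y ρ from hvx)
  · rintro ⟨hx, ρ, hρ, hball⟩
    refine ⟨⟨x, subset_affineSpan ℝ s hx⟩, ?_, rfl⟩
    rw [mem_interior_iff_mem_nhds, Metric.mem_nhds_iff]
    exact ⟨ρ, hρ, fun v hv => hball ⟨hv, v.2⟩⟩

theorem exists_ball_inter_affineSpan_subset_intrinsicInterior
    (hx : x ∈ intrinsicInterior ℝ s) :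
    ∃ ρ > 0, Metric.ball x ρ ∩ (affineSpan ℝ s : Set X) ⊆ intrinsicInterior ℝ s := by
  obtain ⟨-, ρ, hρ, hball⟩ := mem_intrinsicInterior_iff_ball.mp hx
  refine ⟨ρ / 2, half_pos hρ, fun v ⟨hvx, hv⟩ => ?_⟩
  have hsub : Metric.ball v (ρ / 2) ⊆ Metric.ball x ρ := by
    intro w hw
    rw [Metric.mem_ball] at hw hvx ⊢
    linarith [dist_triangle w v x]
  exact mem_intrinsicInterior_iff_ball.mpr
    ⟨hball ⟨hsub (Metric.mem_ball_self (half_pos hρ)), hv⟩, ρ / 2, half_pos hρ,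
      fun w ⟨hw, hws⟩ => hball ⟨hsub hw, hws⟩⟩

theorem intrinsicInterior_mono_of_affineSpan_eq (hst : s ⊆ t)
    (hspan : affineSpan ℝ s = affineSpan ℝ t) :
    intrinsicInterior ℝ s ⊆ intrinsicInterior ℝ t := by
  intro x hx
  obtain ⟨hxs, ρ, hρ, hball⟩ := mem_intrinsicInterior_iff_ball.mp hx
  exact mem_intrinsicInterior_iff_ball.mpr ⟨hst hxs, ρ, hρ, by rw [← hspan]; exact hball.trans hst⟩

variable [FiniteDimensional ℝ X]

theorem closure_subset_affineSpan (s : Set X) : closure s ⊆ affineSpan ℝ s :=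
  (affineSpan ℝ s).closed_of_finiteDimensional.closure_subset_iff.mpr (subset_affineSpan ℝ s)

theorem affineSpan_closure (s : Set X) : affineSpan ℝ (closure s) = affineSpan ℝ s :=
  le_antisymm (affineSpan_le.mpr (closure_subset_affineSpan s))
    (affineSpan_mono ℝ subset_closure)

theorem Convex.add_smul_sub_mem_intrinsicInterior' (hs : Convex ℝ s) {y : X}
    (hx : x ∈ closure s) (hy : y ∈ intrinsicInterior ℝ s) {t : ℝ} (ht : t ∈ Set.Ioc 0 1) :
    x + t • (y - x) ∈ intrinsicInterior ℝ s := by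
  obtain ⟨ht0, ht1⟩ := ht
  obtain ⟨hys, ρ, hρ, hball⟩ := mem_intrinsicInterior_iff_ball.mp hy
  obtain ⟨x', hx's, hxx'⟩ := Metric.mem_closure_iff.mp hx (t * ρ / 2) (by positivity)
  set m := x + t • (y - x)
  have hxA : x ∈ affineSpan ℝ s := closure_subset_affineSpan s hx
  -- Each `v` near `m` is `x' + t • (y' - x')` with `y' ∈ s` near `y`.
  have hnear : Metric.ball m (t * ρ / 2) ∩ (affineSpan ℝ s : Set X) ⊆ s := by
    rintro v ⟨hvm, hvA⟩
    set y' := t⁻¹ • (v -ᵥ x') +ᵥ x'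
    have hy'A : y' ∈ affineSpan ℝ s :=
      (affineSpan ℝ s).smul_vsub_vadd_mem _ hvA (subset_affineSpan ℝ s hx's)
        (subset_affineSpan ℝ s hx's)
    have hdiff : y' - y = t⁻¹ • ((v - m) + (1 - t) • (x - x')) := by
      simp only [y', m, vsub_eq_sub, vadd_eq_add]
      match_scalars <;> field_simp <;> ring
    have hy'y : dist y' y < ρ := by
      rw [Metric.mem_ball, dist_eq_norm] at hvm
      rw [dist_eq_norm] at hxx'
      calc dist y' y = t⁻¹ * ‖(v - m) + (1 - t) • (x - x')‖ := by
            rw [dist_eq_norm, hdiff, norm_smul, Real.norm_of_nonneg (by positivity)]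
        _ ≤ t⁻¹ * (‖v - m‖ + ‖x - x'‖) := by
            gcongr
            refine (norm_add_le _ _).trans (add_le_add_right ?_ _)
            rw [norm_smul, Real.norm_of_nonneg (by linarith)]
            exact mul_le_of_le_one_left (norm_nonneg _) (by linarith)
        _ < t⁻¹ * (t * ρ) := by gcongr; linarith
        _ = ρ := by field_simp
    have hv : v = x' + t • (y' - x') := by
      simp only [y', vsub_eq_sub, vadd_eq_add, add_sub_cancel_right, smul_smul,
        mul_inv_cancel₀ ht0.ne', one_smul]
      abel
    rw [hv]
    exact hs.add_smul_sub_mem hx's (hball ⟨hy'y, hy'A⟩) ⟨ht0.le, ht1⟩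
  have hmA : m ∈ affineSpan ℝ s := by
    simpa [m, vsub_eq_sub, vadd_eq_add, add_comm] using
      (affineSpan ℝ s).smul_vsub_vadd_mem t (subset_affineSpan ℝ s hys) hxA hxA
  exact mem_intrinsicInterior_iff_ball.mpr
    ⟨hnear ⟨Metric.mem_ball_self (by positivity), hmA⟩, t * ρ / 2, by positivity, hnear⟩

theorem Convex.closure_intrinsicInterior (hs : Convex ℝ s) :
    closure (intrinsicInterior ℝ s) = closure s := by
  refine (closure_mono intrinsicInterior_subset).antisymm (closure_minimal (fun x hx => ?_)
    isClosed_closure)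
  obtain ⟨y, hy⟩ := Set.Nonempty.intrinsicInterior hs ⟨x, hx⟩
  have hlim : Tendsto (fun t : ℝ => x + t • (y - x)) (𝓝[>] 0) (𝓝 x) :=
    tendsto_nhdsWithin_of_tendsto_nhds <| by
      simpa using ((continuous_id.smul continuous_const).const_add x).tendsto (0 : ℝ)
  exact mem_closure_of_tendsto hlim <| eventually_of_mem (Ioc_mem_nhdsGT one_pos)
    fun t ht => hs.add_smul_sub_mem_intrinsicInterior' (subset_closure hx) hy ht

theorem Convex.intrinsicInterior_closure (hs : Convex ℝ s) :
    intrinsicInterior ℝ (closure s) = intrinsicInterior ℝ s := by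
  refine subset_antisymm (fun x hx => ?_)
    (intrinsicInterior_mono_of_affineSpan_eq subset_closure (affineSpan_closure s).symm)
  obtain ⟨hxs, ρ, hρ, hball⟩ := mem_intrinsicInterior_iff_ball.mp hx
  obtain ⟨y, hy⟩ := Set.Nonempty.intrinsicInterior hs (closure_nonempty_iff.mp ⟨x, hxs⟩)
  -- Push `x` slightly away from `y` to `z ∈ closure s`; then `x` lies on `(z, y]`.
  have hlim : Tendsto (fun δ : ℝ => x + δ • (x - y)) (𝓝[>] 0) (𝓝 x) :=
    tendsto_nhdsWithin_of_tendsto_nhds <| by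
      simpa using ((continuous_id.smul continuous_const).const_add x).tendsto (0 : ℝ)
  obtain ⟨δ, hδρ, hδ : 0 < δ⟩ :=
    ((hlim.eventually (Metric.ball_mem_nhds x hρ)).and self_mem_nhdsWithin).exists
  set z := x + δ • (x - y)
  have hzA : z ∈ affineSpan ℝ (closure s) := by
    have hxA := subset_affineSpan ℝ _ hxs
    have hyA := subset_affineSpan ℝ _ (subset_closure (intrinsicInterior_subset hy))
    simpa [z, vsub_eq_sub, vadd_eq_add, add_comm] using
      (affineSpan ℝ (closure s)).smul_vsub_vadd_mem δ hxA hyA hxA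
  have hz : z ∈ closure s := hball ⟨hδρ, hzA⟩
  have hx_eq : x = z + (δ / (1 + δ)) • (y - z) := by
    simp only [z]
    match_scalars <;> field_simp <;> ring
  rw [hx_eq]
  exact hs.add_smul_sub_mem_intrinsicInterior' hz hy
    ⟨by positivity, (div_le_one (by positivity)).mpr (by linarith)⟩

theorem Convex.intrinsicInterior_eq_of_subset_of_subset_closure (hs : Convex ℝ s)
    (hst : intrinsicInterior ℝ s ⊆ t) (hts : t ⊆ closure s) :
    intrinsicInterior ℝ t = intrinsicInterior ℝ s := by
  have hspan : affineSpan ℝ t = affineSpan ℝ s := by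
    refine le_antisymm ((affineSpan_mono ℝ hts).trans (affineSpan_closure s).le) ?_
    calc affineSpan ℝ s = affineSpan ℝ (closure (intrinsicInterior ℝ s)) := by
          rw [hs.closure_intrinsicInterior, affineSpan_closure]
      _ = affineSpan ℝ (intrinsicInterior ℝ s) := affineSpan_closure _
      _ ≤ affineSpan ℝ t := affineSpan_mono ℝ hst
  refine subset_antisymm ?_ fun x hx => ?_
  · rw [← hs.intrinsicInterior_closure]
    exact intrinsicInterior_mono_of_affineSpan_eq hts (by rw [hspan, affineSpan_closure])
  · obtain ⟨ρ, hρ, hball⟩ := exists_ball_inter_affineSpan_subset_intrinsicInterior hx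
    exact mem_intrinsicInterior_iff_ball.mpr
      ⟨hst hx, ρ, hρ, by rw [hspan]; exact hball.trans hst⟩

end IntrinsicInterior

theorem exists_mem_inner_lt_of_mem_intrinsicInterior {X : Type*} [NormedAddCommGroup X]
    [InnerProductSpace ℝ X] {s : Set X} {u e : X} (hu : u ∈ intrinsicInterior ℝ s)
    (he : e ∈ (affineSpan ℝ s).direction) (he0 : e ≠ 0) : ∃ v ∈ s, ⟪u, e⟫ < ⟪v, e⟫ := by
  obtain ⟨hus, ρ, hρ, hball⟩ := mem_intrinsicInterior_iff_ball.mp hu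
  have hlim : Tendsto (fun t : ℝ => u + t • e) (𝓝[>] 0) (𝓝 u) :=
    tendsto_nhdsWithin_of_tendsto_nhds <| by
      simpa using ((continuous_id.smul continuous_const).const_add u).tendsto (0 : ℝ)
  obtain ⟨t, htρ, ht : 0 < t⟩ :=
    ((hlim.eventually (Metric.ball_mem_nhds u hρ)).and self_mem_nhdsWithin).exists
  have htA : u + t • e ∈ affineSpan ℝ s := by
    simpa [vadd_eq_add, add_comm] using AffineSubspace.vadd_mem_of_mem_direction
      (Submodule.smul_mem _ t he) (subset_affineSpan ℝ s hus)
  refine ⟨u + t • e, hball ⟨htρ, htA⟩, ?_⟩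
  rw [inner_add_left, real_inner_smul_left, real_inner_self_eq_norm_sq, lt_add_iff_pos_right]
  exact mul_pos ht (by positivity)

theorem nearEq_of_subset_of_subset_closure {X : Type*} [NormedAddCommGroup X]
    [NormedSpace ℝ X] [FiniteDimensional ℝ X] {R S : Set X} (hRS : R ⊆ S)
    (hSR : S ⊆ closure R) (hri : intrinsicInterior ℝ (convexHull ℝ R) ⊆ R) :
    NearEq R S := by
  have hconv := convex_convexHull ℝ R
  have hcl : closure R ⊆ closure (convexHull ℝ R) := closure_mono (subset_convexHull ℝ R)
  refine ⟨(closure_mono hRS).antisymm (closure_minimal hSR isClosed_closure), ?_⟩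
  rw [hconv.intrinsicInterior_eq_of_subset_of_subset_closure hri
      ((subset_convexHull ℝ R).trans subset_closure),
    hconv.intrinsicInterior_eq_of_subset_of_subset_closure (hri.trans hRS) (hSR.trans hcl)]

def FirmlyNonexpansive {X : Type*} [NormedAddCommGroup X] [InnerProductSpace ℝ X]
    (F : X → X) : Prop :=
  ∀ x y, ‖F x - F y‖ ^ 2 ≤ ⟪F x - F y, x - y⟫

namespace FirmlyNonexpansive

variable {X : Type*} [NormedAddCommGroup X] [InnerProductSpace ℝ X] {F : X → X}

theorem inner_nonneg (hF : FirmlyNonexpansive F) (x y : X) : 0 ≤ ⟪F x - F y, x - y⟫ :=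
  (sq_nonneg _).trans (hF x y)

theorem id_sub (hF : FirmlyNonexpansive F) : FirmlyNonexpansive fun x => x - F x := by
  intro x y
  have h := hF x y
  rw [show (x - F x) - (y - F y) = (x - y) - (F x - F y) by abel]
  generalize x - y = d, F x - F y = e at h ⊢
  rw [← real_inner_self_eq_norm_sq] at h ⊢
  simp only [inner_sub_left, inner_sub_right]
  linarith [real_inner_comm d e]

theorem lipschitzWith (hF : FirmlyNonexpansive F) : LipschitzWith 1 F := by
  refine LipschitzWith.of_dist_le_mul fun x y => ?_
  rw [NNReal.coe_one, one_mul, dist_eq_norm, dist_eq_norm]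
  have h := (hF x y).trans (real_inner_le_norm _ _)
  nlinarith [norm_nonneg (F x - F y), norm_nonneg (x - y)]

theorem exists_smul_add_eq [CompleteSpace X] (hF : FirmlyNonexpansive F) {ε : ℝ} (hε : 0 < ε)
    (w : X) : ∃ x, ε • x + F x = w := by
  set K : NNReal := ⟨(1 + ε)⁻¹, by positivity⟩
  have hK : K < 1 := by
    rw [← NNReal.coe_lt_coe]
    exact inv_lt_one_of_one_lt₀ (by linarith)
  have hlip : LipschitzWith K fun x => (1 + ε)⁻¹ • (x - F x + w) := by
    refine LipschitzWith.of_dist_le_mul fun x y => ?_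
    have h := hF.id_sub.lipschitzWith.dist_le_mul x y
    rw [NNReal.coe_one, one_mul, dist_eq_norm, dist_eq_norm] at h
    rw [dist_eq_norm, dist_eq_norm, ← smul_sub, norm_smul, Real.norm_of_nonneg (by positivity),
      add_sub_add_right_eq_sub]
    exact mul_le_mul_of_nonneg_left h (by positivity)
  obtain ⟨x, hx, -⟩ := ContractingWith.exists_fixedPoint ⟨hK, hlip⟩ 0 (edist_ne_top _ _)
  refine ⟨x, ?_⟩
  have hfix : (1 + ε) • x = x - F x + w := by
    conv_lhs => rw [← hx.eq]
    rw [smul_smul, mul_inv_cancel₀ (by positivity), one_smul]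
  rw [add_smul, one_smul] at hfix
  linear_combination (norm := module) hfix

theorem mem_closure_range_of_inner_le [CompleteSpace X] (hF : FirmlyNonexpansive F)
    {w c : X} {L : ℝ} (h : ∀ x, ⟪w - F x, x - F x - c⟫ ≤ L) : w ∈ closure (Set.range F) := by
  set K := |L + ‖w + c‖ ^ 2 / 4|
  -- Along solutions of `ε • x + F x = w`, `h` bounds `ε * ‖x‖ ^ 2` uniformly in `ε`.
  have hbound : ∀ ε > 0, ∀ x, ε • x + F x = w → ‖w - F x‖ ^ 2 ≤ ε * K := by
    intro ε hε x hx
    have hwx : w - F x = ε • x := by rw [← hx]; abel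
    have hx' := h x
    rw [hwx, show x - F x - c = x + ε • x - (w + c) by rw [← hx]; abel, inner_sub_right,
      inner_add_right, real_inner_smul_left, real_inner_self_eq_norm_sq,
      real_inner_self_eq_norm_sq] at hx'
    have hcs := real_inner_le_norm (ε • x) (w + c)
    have hsq : ‖ε • x‖ ^ 2 = ε * (ε * ‖x‖ ^ 2) := by
      rw [norm_smul, Real.norm_of_nonneg hε.le]; ring
    rw [hwx, hsq]
    refine mul_le_mul_of_nonneg_left ((le_abs_self _).trans' ?_) hε.le
    nlinarith [sq_nonneg (‖ε • x‖ - ‖w + c‖ / 2)]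
  refine Metric.mem_closure_iff.mpr fun δ hδ => ?_
  have hε : 0 < δ ^ 2 / (2 * (K + 1)) := by positivity
  obtain ⟨x, hx⟩ := hF.exists_smul_add_eq hε w
  refine ⟨F x, Set.mem_range_self x, ?_⟩
  rw [dist_eq_norm]
  refine abs_lt_of_sq_lt_sq' ((hbound _ hε x hx).trans_lt ?_) hδ.le |>.2
  rw [div_mul_eq_mul_div, div_lt_iff₀ (by positivity)]
  nlinarith [abs_nonneg (L + ‖w + c‖ ^ 2 / 4)]

theorem inner_le_of_tendsto (hF : FirmlyNonexpansive F) {u e : X} {ε : ℕ → ℝ}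
    {x : ℕ → X} (hε0 : ∀ n, 0 ≤ ε n) (hε : Tendsto ε atTop (𝓝 0))
    (hx : ∀ n, ε n • x n + F (x n) = u) (hnorm : Tendsto (fun n => ‖x n‖) atTop atTop)
    (he : Tendsto (fun n => ‖x n‖⁻¹ • x n) atTop (𝓝 e)) (p : X) : ⟪F p, e⟫ ≤ ⟪u, e⟫ := by
  rw [← sub_nonpos, ← inner_sub_left]
  have hle : ∀ n, 0 < ‖x n‖ →
      ⟪F p - u, ‖x n‖⁻¹ • x n⟫ ≤ ‖x n‖⁻¹ * ⟪F p - u, p⟫ + ε n * ‖p‖ := by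
    intro n hn
    have hmono := hF.inner_nonneg (x n) p
    rw [show F (x n) - F p = -((F p - u) + ε n • x n) by rw [← hx n]; abel, inner_neg_left,
      neg_nonneg, inner_add_left, inner_sub_right, inner_sub_right, real_inner_smul_left,
      real_inner_smul_left, real_inner_self_eq_norm_sq] at hmono
    have hxp := real_inner_le_norm (x n) p
    have hεxp : ε n * ⟪x n, p⟫ ≤ ε n * (‖x n‖ * ‖p‖) := mul_le_mul_of_nonneg_left hxp (hε0 n)
    rw [real_inner_smul_right, ← div_eq_inv_mul, div_le_iff₀ hn, add_mul,
      mul_right_comm ‖x n‖⁻¹, inv_mul_cancel₀ hn.ne', one_mul]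
    nlinarith [mul_nonneg (hε0 n) (sq_nonneg ‖x n‖)]
  have hrhs : Tendsto (fun n => ‖x n‖⁻¹ * ⟪F p - u, p⟫ + ε n * ‖p‖) atTop (𝓝 0) := by
    simpa using ((tendsto_inv_atTop_zero.comp hnorm).mul_const _).add (hε.mul_const ‖p‖)
  exact le_of_tendsto_of_tendsto (tendsto_const_nhds.inner he) hrhs
    ((hnorm.eventually_gt_atTop 0).mono hle)

theorem intrinsicInterior_convexHull_range_subset [FiniteDimensional ℝ X]
    (hF : FirmlyNonexpansive F) :
    intrinsicInterior ℝ (convexHull ℝ (Set.range F)) ⊆ Set.range F := by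
  intro u hu
  set ε : ℕ → ℝ := fun n => 1 / ((n : ℝ) + 1)
  have hε0 : ∀ n, 0 < ε n := fun n => Nat.one_div_pos_of_nat
  have hε : Tendsto ε atTop (𝓝 0) := tendsto_one_div_add_atTop_nhds_zero_nat
  choose x hx using fun n => hF.exists_smul_add_eq (hε0 n) u
  by_cases hbdd : ∃ b, ∃ᶠ n in atTop, x n ∈ Metric.closedBall 0 b
  · obtain ⟨b, hb⟩ := hbdd
    obtain ⟨x₀, -, φ, hφ, hlim⟩ := (isCompact_closedBall 0 b).tendsto_subseq' hb
    refine ⟨x₀, tendsto_nhds_unique (hF.lipschitzWith.continuous.tendsto x₀ |>.comp hlim) ?_⟩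
    have hFx : ∀ n, F (x n) = u - ε n • x n := fun n => by rw [← hx n]; abel
    simpa [Function.comp_def, hFx] using
      tendsto_const_nhds.sub ((hε.comp hφ.tendsto_atTop).smul hlim)
  exfalso
  simp only [not_exists, not_frequently, Metric.mem_closedBall, dist_zero_right, not_le] at hbdd
  have hnorm : Tendsto (fun n => ‖x n‖) atTop atTop :=
    tendsto_atTop.mpr fun b => (hbdd b).mono fun _ h => h.le
  have hsphere : ∃ᶠ n in atTop, ‖x n‖⁻¹ • x n ∈ Metric.sphere (0 : X) 1 := by
    refine ((hnorm.eventually_gt_atTop 0).mono fun n hn => ?_).frequently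
    rw [mem_sphere_zero_iff_norm, norm_smul, norm_inv, norm_norm, inv_mul_cancel₀ hn.ne']
  obtain ⟨e, he, φ, hφ, hlim⟩ := (isCompact_sphere (0 : X) 1).tendsto_subseq' hsphere
  set A := affineSpan ℝ (convexHull ℝ (Set.range F))
  set V := A.direction
  have huA : u ∈ A := subset_affineSpan ℝ _ (intrinsicInterior_subset hu)
  -- `x n = (n + 1) • (u - F (x n))` is a difference of two points of the affine span.
  have hxV : ∀ n, x n ∈ V := fun n => by
    have hFA : F (x n) ∈ A :=
      subset_affineSpan ℝ _ (subset_convexHull ℝ _ (Set.mem_range_self (x n)))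
    have hdiff := AffineSubspace.vsub_mem_direction huA hFA
    convert V.smul_mem ((n : ℝ) + 1) hdiff using 1
    rw [← hx n, vsub_eq_sub, add_sub_cancel_right, smul_smul, mul_one_div_cancel (by positivity),
      one_smul]
  have heV : e ∈ V := V.closed_of_finiteDimensional.mem_of_tendsto hlim
    (Eventually.of_forall fun n => V.smul_mem _ (hxV _))
  have hhalf : convexHull ℝ (Set.range F) ⊆ {v | ⟪v, e⟫ ≤ ⟪u, e⟫} := by
    refine convexHull_min ?_ (convex_halfSpace_le
      ⟨fun v w => inner_add_left v w e, fun c v => real_inner_smul_left v e c⟩ _)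
    rintro _ ⟨p, rfl⟩
    exact hF.inner_le_of_tendsto (fun n => (hε0 (φ n)).le) (hε.comp hφ.tendsto_atTop)
      (fun n => hx (φ n)) (hnorm.comp hφ.tendsto_atTop) hlim p
  obtain ⟨v, hv, hlt⟩ := exists_mem_inner_lt_of_mem_intrinsicInterior hu heV
    (ne_zero_of_mem_unit_sphere ⟨e, he⟩)
  exact (hhalf hv).not_gt hlt

end FirmlyNonexpansive

theorem Is3StarMonotoneOp.exists_le_inner {X : Type*} [NormedAddCommGroup X]
    [InnerProductSpace ℝ X] {A : X → Set X} (hA : Is3StarMonotoneOp A)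
    (hdom : svDom A = Set.univ) (z : X) {v : X} (hv : v ∈ svRan A) :
    ∃ L, ∀ p a, a ∈ A p → L ≤ ⟪p - z, a - v⟫ := by
  obtain ⟨L, hL⟩ := hA z (hdom ▸ Set.mem_univ z) v hv
  refine ⟨L, fun p a ha => ?_⟩
  rw [← inner_neg_neg, neg_sub, neg_sub]
  exact hL ⟨p, a, ha, rfl⟩

section DouglasRachford

variable {X : Type*} [NormedAddCommGroup X] [InnerProductSpace ℝ X] {A B : X → Set X}
  {JA JB : X → X}

theorem exists_graph_decomposition_id_sub_drT (hJA : IsResolventOf JA A)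
    (hJB : IsResolventOf JB B) (x : X) :
    ∃ p a b, a ∈ A p ∧ b ∈ B (p - (a + b)) ∧ x = p + a ∧ x - drT JA JB x = a + b := by
  set p := JA x
  set q := JB ((2 : ℝ) • p - x)
  have hq : p - ((x - p) + ((2 : ℝ) • p - x - q)) = q := by module
  refine ⟨p, x - p, (2 : ℝ) • p - x - q, hJA x, ?_, by abel, ?_⟩
  · rw [hq]
    exact hJB _
  · simp only [drT, p, q]
    module

theorem range_id_sub_drT_subset (hJA : IsResolventOf JA A) (hJB : IsResolventOf JB B) :
    Set.range (fun x => x - drT JA JB x) ⊆ svRan A + svRan B := by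
  rintro _ ⟨x, rfl⟩
  obtain ⟨p, a, b, ha, hb, -, hx⟩ := exists_graph_decomposition_id_sub_drT hJA hJB x
  dsimp only
  rw [hx]
  exact Set.add_mem_add (Set.mem_iUnion_of_mem p ha) (Set.mem_iUnion_of_mem _ hb)

theorem firmlyNonexpansive_id_sub_drT (hA : IsMonotoneOp A) (hB : IsMonotoneOp B)
    (hJA : IsResolventOf JA A) (hJB : IsResolventOf JB B) :
    FirmlyNonexpansive fun x => x - drT JA JB x := by
  intro x y
  obtain ⟨p, a, b, ha, hb, rfl, hx⟩ := exists_graph_decomposition_id_sub_drT hJA hJB x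
  obtain ⟨p', a', b', ha', hb', rfl, hy⟩ := exists_graph_decomposition_id_sub_drT hJA hJB y
  have hmA := hA ha ha'
  have hmB := hB hb hb'
  dsimp only
  rw [hx, hy, show a + b - (a' + b') = (a - a') + (b - b') by abel,
    show p + a - (p' + a') = (p - p') + (a - a') by abel]
  rw [show p - (a + b) - (p' - (a' + b')) = (p - p') - ((a - a') + (b - b')) by abel] at hmB
  generalize p - p' = dp, a - a' = da, b - b' = db at hmA hmB ⊢
  rw [← real_inner_self_eq_norm_sq]
  simp only [inner_add_left, inner_add_right, inner_sub_left] at hmB ⊢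
  linarith [real_inner_comm da db, real_inner_comm dp da, real_inner_comm dp db]

theorem inner_id_sub_drT_le (hJA : IsResolventOf JA A) (hJB : IsResolventOf JB B)
    {y a' b' : X} {L : ℝ}
    (hL : ∀ p a q b, a ∈ A p → b ∈ B q →
      L ≤ ⟪p - y, a - a'⟫ + ⟪q - (y - (a' + b')), b - b'⟫) (x : X) :
    ⟪(a' + b') - (x - drT JA JB x), x - (x - drT JA JB x) - (y - b')⟫ ≤ -L := by
  obtain ⟨p, a, b, ha, hb, rfl, hx⟩ := exists_graph_decomposition_id_sub_drT hJA hJB x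
  have h := hL _ _ _ _ ha hb
  rw [hx, show p + a - (a + b) - (y - b') = (p - y) + (a - a') + (a' + b' - (a + b)) by abel]
  rw [show p - (a + b) - (y - (a' + b')) = (p - y) + (a' + b' - (a + b)) by abel,
    show b - b' = -((a' + b' - (a + b)) + (a - a')) by abel] at h
  generalize p - y = u, a - a' = d, a' + b' - (a + b) = g at h ⊢
  simp only [inner_add_left, inner_add_right, inner_neg_right] at h ⊢
  linarith [real_inner_comm u g, real_inner_comm g d]

theorem svRan_add_subset_closure_range_id_sub_drT [CompleteSpace X] (hA : IsMonotoneOp A)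
    (hB : IsMonotoneOp B)
    (hC : (svDom A = Set.univ ∧ Is3StarMonotoneOp A) ∨
      (svDom B = Set.univ ∧ Is3StarMonotoneOp B))
    (hJA : IsResolventOf JA A) (hJB : IsResolventOf JB B) :
    svRan A + svRan B ⊆ closure (Set.range fun x => x - drT JA JB x) := by
  rintro _ ⟨a', ha', b', hb', rfl⟩
  obtain ⟨y', ha'⟩ := Set.mem_iUnion.mp ha'
  obtain ⟨z', hb'⟩ := Set.mem_iUnion.mp hb'
  -- One of the two coupling terms is bounded below by 3* monotonicity, the other by monotonicity.
  obtain ⟨y, L, hL⟩ : ∃ y L, ∀ p a q b, a ∈ A p → b ∈ B q →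
      L ≤ ⟪p - y, a - a'⟫ + ⟪q - (y - (a' + b')), b - b'⟫ := by
    rcases hC with ⟨hdomA, h3A⟩ | ⟨hdomB, h3B⟩
    · obtain ⟨L, hL⟩ := h3A.exists_le_inner hdomA (a' + b' + z') (Set.mem_iUnion_of_mem y' ha')
      refine ⟨a' + b' + z', L, fun p a q b ha hb => ?_⟩
      rw [add_sub_cancel_left]
      linarith [hL p a ha, hB hb hb']
    · obtain ⟨L, hL⟩ := h3B.exists_le_inner hdomB (y' - (a' + b')) (Set.mem_iUnion_of_mem z' hb')
      exact ⟨y', L, fun p a q b ha hb => by linarith [hL q b hb, hA ha ha']⟩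
  exact (firmlyNonexpansive_id_sub_drT hA hB hJA hJB).mem_closure_range_of_inner_le
    (inner_id_sub_drT_le hJA hJB hL)

end DouglasRachford

/-- If one of the maximally monotone operators `A, B` is 3* monotone with full domain,
then `ran (Id - T_{(A,B)}) ≃ ran A + ran B`. -/
theorem ran_id_sub_drT_nearEq_ran_add {X : Type*} [NormedAddCommGroup X]
    [InnerProductSpace ℝ X] [FiniteDimensional ℝ X] (A B : X → Set X)
    (hA : IsMaxMonotoneOp A) (hB : IsMaxMonotoneOp B)
    (hC : (svDom A = Set.univ ∧ Is3StarMonotoneOp A) ∨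
      (svDom B = Set.univ ∧ Is3StarMonotoneOp B))
    (JA JB : X → X) (hJA : IsResolventOf JA A) (hJB : IsResolventOf JB B) :
    NearEq (Set.range fun x => x - drT JA JB x) (svRan A + svRan B) :=
  nearEq_of_subset_of_subset_closure (range_id_sub_drT_subset hJA hJB)
    (svRan_add_subset_closure_range_id_sub_drT hA.1 hB.1 hC hJA hJB)
    (firmlyNonexpansive_id_sub_drT hA.1 hB.1 hJA hJB).intrinsicInterior_convexHull_range_subset
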